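/- arXiv:2005.05780 — 2 statements merged into one kernel-verified Lean document; each statement's English description precedes it below -/
import Mathlib

section
/- Let a, b, c be nonzero complex numbers with c ≠ b²/(8a), let γ and δ be the two roots of a z² + b z + c = 0 (so γ + δ = −b/a and γδ = c/a), and set S₁ = {−b/(2a)}, S₂ = {γ, δ}, S₃ = {∞}. Then for every nonconstant meromorphic function h on ℂ, the functions f = h + γ + δ and g = −h satisfy E_f(S_j, ∞) = E_g(S_j, ∞) for j = 1, 2, 3 (in particular E_f(S₁, 0) = E_g(S₁, 0), E_f(S₂, 3) = E_g(S₂, 3), E_f(S₃, 1) = E_g(S₃, 1)), yet f ≢ g. Hence the conclusion of the three-set uniqueness theorem fails when the degree n of the defining polynomial is 2. -/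
open Complex Filter MeasureTheory Metric
open scoped Classical

/-- The order of a function at a point, as an integer (`0` if not meromorphic or of
order `⊤`, i.e. identically zero near the point). -/
noncomputable def mOrd (f : ℂ → ℂ) (z : ℂ) : ℤ :=
  if h : MeromorphicAt f z then ((meromorphicOrderAt f z).untopD 0) else 0

/-- Multiplicity of `z` as an `α`-point of `f`. -/
noncomputable def zMult (f : ℂ → ℂ) (α z : ℂ) : ℕ :=
  (mOrd (fun w => f w - α) z).toNat

/-- Multiplicity of `z` as a pole of `f`. -/
noncomputable def pMult (f : ℂ → ℂ) (z : ℂ) : ℕ :=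
  (-(mOrd f z)).toNat

/-- Pointwise contribution of `z` to the multiset `E_f(S, k)`:
an `α`-point (`α ∈ S`) of multiplicity `m` counts `m` times if `m ≤ k`, else `k+1` times. -/
noncomputable def Ecount (f : ℂ → ℂ) (S : Set ℂ) (k : ℕ) (z : ℂ) : ℕ :=
  ∑ᶠ α ∈ S, min (zMult f α z) (k + 1)

/-- `f` and `g` share the set `S ⊆ ℂ` with weight `k`, i.e. `E_f(S,k) = E_g(S,k)`. -/
def EshareEq (f g : ℂ → ℂ) (S : Set ℂ) (k : ℕ) : Prop :=
  ∀ z : ℂ, Ecount f S k z = Ecount g S k z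

/-- `f` and `g` share the set `S ⊆ ℂ` counting multiplicities (weight `∞`). -/
def EshareEqCM (f g : ℂ → ℂ) (S : Set ℂ) : Prop :=
  ∀ z : ℂ, (∑ᶠ α ∈ S, zMult f α z) = ∑ᶠ α ∈ S, zMult g α z

/-- `f` and `g` share `{∞}` with weight `k`. -/
def EpoleEq (f g : ℂ → ℂ) (k : ℕ) : Prop :=
  ∀ z : ℂ, min (pMult f z) (k + 1) = min (pMult g z) (k + 1)

/-- `f` and `g` share `{∞}` counting multiplicities. -/
def EpoleEqCM (f g : ℂ → ℂ) : Prop :=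
  ∀ z : ℂ, pMult f z = pMult g z

/-- Equality of meromorphic functions: `f ≡ g`, i.e. `f = g` off a countable set. -/
def MEq (f g : ℂ → ℂ) : Prop :=
  ∃ D : Set ℂ, D.Countable ∧ ∀ z ∉ D, f z = g z

/-- `f` is a nonconstant meromorphic function in the plane. -/
def MNonconst (f : ℂ → ℂ) : Prop :=
  MeromorphicOn f Set.univ ∧ ¬ ∃ c : ℂ, MEq f (fun _ => c)

/-- The unintegrated counting function of a pointwise (multiplicity) count `w`:
number of points in the closed disc of radius `t`, counted with `w`. -/
noncomputable def ncount (w : ℂ → ℕ) (t : ℝ) : ℕ :=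
  ∑ᶠ z ∈ closedBall (0 : ℂ) t, w z

/-- The integrated counting function associated to an unintegrated one. -/
noncomputable def integN (nf : ℝ → ℕ) (r : ℝ) : ℝ :=
  (∫ t in (0:ℝ)..r, ((nf t : ℝ) - (nf 0 : ℝ)) / t) + (nf 0 : ℝ) * Real.log r

/-- The Nevanlinna integrated counting function `N(r, f)` of the poles of `f`. -/
noncomputable def NN (f : ℂ → ℂ) (r : ℝ) : ℝ :=
  integN (ncount (pMult f)) r

/-- The Nevanlinna proximity function `m(r, f)`. -/
noncomputable def mprox (f : ℂ → ℂ) (r : ℝ) : ℝ :=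
  (2 * Real.pi)⁻¹ *
    ∫ θ in (0:ℝ)..(2 * Real.pi), Real.log (max ‖f (r * Complex.exp (θ * Complex.I))‖ 1)

/-- The Nevanlinna characteristic `T(r, f)`. -/
noncomputable def Tchar (f : ℂ → ℂ) (r : ℝ) : ℝ :=
  mprox f r + NN f r

/-- `u` is a quantity of type `S(r, h)` : `u r = o(T(r, h))` as `r → ∞`, outside a
possible exceptional set of finite linear measure. -/
def SmallWrt (h : ℂ → ℂ) (u : ℝ → ℝ) : Prop :=
  ∃ E : Set ℝ, volume E < ⊤ ∧
    Tendsto (fun r => u r / Tchar h r) (atTop ⊓ Filter.principal Eᶜ) (nhds 0)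


lemma mOrd_eq_order {F : ℂ → ℂ} {z : ℂ} (hF : MeromorphicAt F z) :
    mOrd F z = (meromorphicOrderAt F z).untopD 0 := by
  simp only [mOrd, dif_pos hF]

lemma order_neg {F : ℂ → ℂ} {z : ℂ} (hF : MeromorphicAt F z)
    (hN : MeromorphicAt (fun w => -(F w)) z) : meromorphicOrderAt (fun w => -(F w)) z = meromorphicOrderAt F z := by
  rcases eq_or_ne (meromorphicOrderAt F z) ⊤ with ht | ht
  · rw [ht, meromorphicOrderAt_eq_top_iff]
    filter_upwards [meromorphicOrderAt_eq_top_iff.mp ht] with w hw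
    simp [hw]
  · obtain ⟨n, hn⟩ := WithTop.ne_top_iff_exists.mp ht
    rw [← hn, meromorphicOrderAt_eq_int_iff hN]
    obtain ⟨g, hg, hgx, hfg⟩ := (meromorphicOrderAt_eq_int_iff (n := n) hF).mp hn.symm
    refine ⟨fun w => -(g w), hg.neg, by simpa using hgx, ?_⟩
    filter_upwards [hfg] with w hw
    rw [hw, smul_neg]

lemma mOrd_neg {F : ℂ → ℂ} (z : ℂ) (hF : MeromorphicAt F z) :
    mOrd (fun w => -(F w)) z = mOrd F z := by
  have hN : MeromorphicAt (fun w => -(F w)) z := hF.neg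
  rw [mOrd_eq_order hN, mOrd_eq_order hF, order_neg hF hN]

lemma order_add_const {f : ℂ → ℂ} {x : ℂ} (hf : MeromorphicAt f x) (k : ℂ)
    (hg : MeromorphicAt (fun w => f w + k) x) :
    (meromorphicOrderAt f x < 0 → meromorphicOrderAt (fun w => f w + k) x = meromorphicOrderAt f x) ∧ (0 ≤ meromorphicOrderAt f x → 0 ≤ meromorphicOrderAt (fun w => f w + k) x) := by
  rcases eq_or_ne (meromorphicOrderAt f x) ⊤ with ht | ht
  · refine ⟨fun hlt => absurd hlt (by simp [ht]), fun _ => ?_⟩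
    have hev := meromorphicOrderAt_eq_top_iff.mp ht
    rcases eq_or_ne k 0 with rfl | hk
    · have hT : meromorphicOrderAt (fun w => f w + 0) x = ⊤ := by
        rw [meromorphicOrderAt_eq_top_iff]; filter_upwards [hev] with w hw; simp [hw]
      rw [hT]; exact le_top
    · have h0 : meromorphicOrderAt (fun w => f w + k) x = (0 : ℤ) := by
        rw [meromorphicOrderAt_eq_int_iff hg]
        exact ⟨fun _ => k, analyticAt_const, hk, by filter_upwards [hev] with w hw; simp [hw]⟩
      rw [h0]; exact_mod_cast (by norm_num : (0:ℤ) ≤ 0)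
  · obtain ⟨n, hn⟩ := WithTop.ne_top_iff_exists.mp ht
    obtain ⟨g, hga, hgx, hfe⟩ := (meromorphicOrderAt_eq_int_iff (n := n) hf).mp hn.symm
    rcases lt_or_ge n 0 with hneg | hpos
    · have key : meromorphicOrderAt (fun w => f w + k) x = n := by
        rw [meromorphicOrderAt_eq_int_iff hg]
        set p : ℕ := (-n).toNat with hp
        have hpz : (p : ℤ) = -n := Int.toNat_of_nonneg (by omega)
        refine ⟨fun w => g w + (w - x) ^ p * k,
          hga.add ((((analyticAt_id).sub analyticAt_const).pow p).mul analyticAt_const), ?_, ?_⟩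
        · have hp1 : p ≠ 0 := by omega
          simpa [sub_self, zero_pow hp1] using hgx
        · filter_upwards [hfe, self_mem_nhdsWithin] with w hw hwx
          have hzx : w - x ≠ 0 := sub_ne_zero.mpr (by simpa using hwx)
          have hone : (w - x) ^ n * (w - x : ℂ) ^ (p : ℕ) = 1 := by
            rw [← zpow_natCast (w - x) p, ← zpow_add₀ hzx, hpz]; simp
          rw [hw, smul_eq_mul, smul_eq_mul, mul_add, ← mul_assoc, hone, one_mul]
      refine ⟨fun _ => by rw [key, ← hn], fun h0 => ?_⟩
      rw [← hn] at h0
      exact absurd h0 (by exact_mod_cast not_le.mpr hneg)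
    · refine ⟨fun hlt => absurd hlt ?_, fun _ => ?_⟩
      · rw [← hn]; exact not_lt.mpr (by exact_mod_cast hpos)
      · by_contra hcon
        push_neg at hcon
        have hgt : meromorphicOrderAt (fun w => f w + k) x ≠ ⊤ := by
          intro hT; rw [hT] at hcon; exact absurd le_top hcon.not_ge
        obtain ⟨m, hm⟩ := WithTop.ne_top_iff_exists.mp hgt
        have hm0 : m < 0 := by rw [← hm] at hcon; exact_mod_cast hcon
        obtain ⟨g', hg'a, hg'x, hge⟩ := (meromorphicOrderAt_eq_int_iff (n := m) hg).mp hm.symm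
        set q : ℕ := (-m).toNat with hq
        have hqz : (q : ℤ) = -m := Int.toNat_of_nonneg (by omega)
        set nn : ℕ := n.toNat with hnn
        have hnnz : (nn : ℤ) = n := Int.toNat_of_nonneg hpos
        have hFa : AnalyticAt ℂ (fun w => (w - x) ^ nn * g w + k) x :=
          ((((analyticAt_id).sub analyticAt_const).pow nn).mul hga).add analyticAt_const
        have hAa : AnalyticAt ℂ (fun w => (w - x) ^ q * ((w - x) ^ nn * g w + k)) x :=
          (((analyticAt_id).sub analyticAt_const).pow q).mul hFa
        have hfreq : ∃ᶠ w in nhdsWithin x {x}ᶜ,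
            (w - x) ^ q * ((w - x) ^ nn * g w + k) = g' w := by
          apply Filter.Eventually.frequently
          filter_upwards [hfe, hge, self_mem_nhdsWithin] with w h1 h2 hwx
          have hzx : w - x ≠ 0 := sub_ne_zero.mpr (by simpa using hwx)
          have hfw : (w - x) ^ nn * g w + k = f w + k := by
            rw [h1, smul_eq_mul, ← hnnz, zpow_natCast]
          have h2' : f w + k = (w - x) ^ m * g' w := by rw [h2, smul_eq_mul]
          have hone : ((w - x : ℂ)) ^ (q : ℕ) * (w - x) ^ m = 1 := by
            rw [← zpow_natCast (w - x) q, ← zpow_add₀ hzx, hqz]; simp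
          rw [hfw, h2', ← mul_assoc, hone, one_mul]
        have hev := (hAa.frequently_eq_iff_eventually_eq hg'a).mp hfreq
        have hx := Filter.EventuallyEq.eq_of_nhds hev
        simp only [sub_self] at hx
        rw [zero_pow (by omega : q ≠ 0), zero_mul] at hx
        exact hg'x hx.symm

lemma untop'_nonneg {o : WithTop ℤ} (ho : 0 ≤ o) : 0 ≤ o.untopD 0 := by
  cases o with
  | top => simp
  | coe n => simpa using (by exact_mod_cast ho : (0:ℤ) ≤ n)

lemma pMult_add_const (h : ℂ → ℂ) (k : ℂ) (z : ℂ) (hm : MeromorphicAt h z) :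
    pMult (fun w => h w + k) z = pMult h z := by
  have hg : MeromorphicAt (fun w => h w + k) z := hm.add (MeromorphicAt.const k z)
  obtain ⟨h1, h2⟩ := order_add_const hm k hg
  simp only [pMult, mOrd_eq_order hg, mOrd_eq_order hm]
  rcases lt_or_ge (meromorphicOrderAt h z) 0 with ho | ho
  · rw [h1 ho]
  · have hh2 := untop'_nonneg (h2 ho)
    have hh1 := untop'_nonneg ho
    omega

lemma pMult_neg (h : ℂ → ℂ) (z : ℂ) (hm : MeromorphicAt h z) :
    pMult (fun w => -(h w)) z = pMult h z := by
  simp only [pMult, mOrd_neg z hm]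


/-- **Example 1.2.** Sharpness of the degree bound: for `S₂ = {γ, δ}` the roots of
`a z² + b z + c` with `c ≠ b²/(8a)`, `S₁ = {-b/(2a)}`, `S₃ = {∞}`, the functions
`f = h + γ + δ` and `g = -h` share each `Sⱼ` counting multiplicities (hence with
weights `(0, 3, 1)`) for every nonconstant meromorphic `h`, yet `f ≢ g`. -/
theorem example_degree_two_fails
    (a b c : ℂ) (ha : a ≠ 0) (hb : b ≠ 0) (hc : c ≠ 0)
    (hcrit : c ≠ b ^ 2 / (8 * a))
    (γ δ : ℂ) (hγ : a * γ ^ 2 + b * γ + c = 0) (hδ : a * δ ^ 2 + b * δ + c = 0)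
    (hsum : γ + δ = -b / a) (hprod : γ * δ = c / a)
    (h : ℂ → ℂ) (hh : MNonconst h) :
    EshareEqCM (fun z => h z + γ + δ) (fun z => -h z) {-b / (2 * a)} ∧
      EshareEqCM (fun z => h z + γ + δ) (fun z => -h z) {γ, δ} ∧
      EpoleEqCM (fun z => h z + γ + δ) (fun z => -h z) ∧
      EshareEq (fun z => h z + γ + δ) (fun z => -h z) {-b / (2 * a)} 0 ∧
      EshareEq (fun z => h z + γ + δ) (fun z => -h z) {γ, δ} 3 ∧
      EpoleEq (fun z => h z + γ + δ) (fun z => -h z) 1 ∧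
      ¬ MEq (fun z => h z + γ + δ) (fun z => -h z) := by
  have hm : ∀ z : ℂ, MeromorphicAt h z := fun z => hh.1 z (Set.mem_univ z)
  have zkey : ∀ α β : ℂ, γ + δ - α = β →
      ∀ z, zMult (fun z => h z + γ + δ) α z = zMult (fun z => -h z) β z := by
    intro α β hβ z
    have e1 : (fun w => h w + γ + δ - α) = (fun w => h w + β) := by
      funext w; rw [← hβ]; ring
    have e2 : (fun w => -h w - β) = (fun w => -(h w + β)) := by
      funext w; ring
    have hmb : MeromorphicAt (fun w => h w + β) z := (hm z).add (MeromorphicAt.const β z)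
    simp only [zMult]
    rw [e1, e2, mOrd_neg z hmb]
  have hhalf : γ + δ - (-b / (2 * a)) = -b / (2 * a) := by
    rw [hsum]; field_simp; ring
  have z1 := zkey _ _ hhalf
  have z2 := zkey γ δ (by ring)
  have z3 := zkey δ γ (by ring)
  have ef : ∀ z, pMult (fun z => h z + γ + δ) z = pMult h z := by
    intro z
    rw [show (fun z => h z + γ + δ) = (fun w => h w + (γ + δ)) from by funext w; ring]
    exact pMult_add_const h (γ + δ) z (hm z)
  have eg : ∀ z, pMult (fun z => -h z) z = pMult h z := fun z => pMult_neg h z (hm z)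
  have pairCM : ∀ (k : ℕ) (z : ℂ),
      (∑ᶠ α ∈ ({γ, δ} : Set ℂ), min (zMult (fun z => h z + γ + δ) α z) k) =
      ∑ᶠ α ∈ ({γ, δ} : Set ℂ), min (zMult (fun z => -h z) α z) k := by
    intro k z
    by_cases hgd : γ = δ
    · subst hgd
      simp only [Set.pair_eq_singleton, finsum_mem_singleton, z2 z]
    · rw [finsum_mem_pair hgd, finsum_mem_pair hgd, z2 z, z3 z, add_comm]
  refine ⟨?_, ?_, ?_, ?_, ?_, ?_, ?_⟩
  · intro z
    rw [finsum_mem_singleton, finsum_mem_singleton, z1 z]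
  · intro z
    by_cases hgd : γ = δ
    · subst hgd
      simp only [Set.pair_eq_singleton, finsum_mem_singleton, z2 z]
    · rw [finsum_mem_pair hgd, finsum_mem_pair hgd, z2 z, z3 z, add_comm]
  · intro z
    rw [ef z, eg z]
  · intro z
    simp only [Ecount]
    rw [finsum_mem_singleton, finsum_mem_singleton, z1 z]
  · intro z
    simp only [Ecount]
    exact pairCM 4 z
  · intro z
    rw [ef z, eg z]
  · rintro ⟨D, hD, hEq⟩
    apply hh.2
    refine ⟨-(γ + δ) / 2, D, hD, fun z hz => ?_⟩
    have h1 : h z + γ + δ = -h z := hEq z hz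
    linear_combination (1 / 2 : ℂ) * h1
end

section
/- Let a and c be nonzero complex numbers, let ω be a nonreal cube root of unity, and set S₁ = {0}, S₂ = {z ∈ ℂ : a z³ + c = 0} = {(−c/a)^{1/3}, (−c/a)^{1/3}ω, (−c/a)^{1/3}ω²} and S₃ = {∞}. Then for every nonconstant meromorphic function f on ℂ, the function g = ω·f satisfies E_f(S_j, ∞) = E_g(S_j, ∞) for j = 1, 2, 3 (in particular E_f(S₁, 0) = E_g(S₁, 0), E_f(S₂, 3) = E_g(S₂, 3), E_f(S₃, 1) = E_g(S₃, 1)), yet f ≢ g. Hence the hypothesis b ≠ 0 in the three-set uniqueness theorem cannot be removed. -/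
open Complex Filter MeasureTheory Metric
open scoped Classical

/-!
Multiplying by a constant `ω ≠ 0` does not change orders, so the `α`-points of `ω f` are the
`ω⁻¹ α`-points of `f` with the same multiplicities, and the poles of `ω f` are those of `f`.
For a cube root of unity `ω`, each of `{0}`, `{z | a z³ + c = 0}` and `{∞}` is stable under
multiplication by `ω`, so summing over it shows that `f` and `ω f` share it counting
multiplicities. But `ω f ≡ f` with `ω ≠ 1` would force `f ≡ 0`.
-/

open scoped Pointwise

section Pointwise

variable {G₀ α M : Type*} [GroupWithZero G₀] [MulAction G₀ α] [AddCommMonoid M]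

theorem finsum_mem_comp_inv_smul_of_smul_set_eq {c : G₀} (hc : c ≠ 0) {s : Set α}
    (hs : c • s = s) (u : α → M) : ∑ᶠ a ∈ s, u (c⁻¹ • a) = ∑ᶠ a ∈ s, u a := by
  conv_lhs => rw [← hs]
  rw [← Set.image_smul, finsum_mem_image (MulAction.injective₀ hc).injOn]
  simp only [inv_smul_smul₀ hc]

end Pointwise

section RootsOfUnity

variable {K : Type*} [Field K]

theorem smul_setOf_pow_eq_of_pow_eq_one {ζ : K} {n : ℕ} (hn : n ≠ 0) (hζ : ζ ^ n = 1)
    (P : K → Prop) : ζ • {z : K | P (z ^ n)} = {z | P (z ^ n)} := by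
  have hζ0 : ζ ≠ 0 := by
    rintro rfl
    simp [zero_pow hn] at hζ
  ext z
  simp [Set.mem_smul_set_iff_inv_smul_mem₀ hζ0, mul_pow, inv_pow, hζ]

theorem setOf_pow_three_eq {ω ρ : K} (hω : ω ^ 2 + ω + 1 = 0) :
    {z : K | z ^ 3 = ρ ^ 3} = {ρ, ρ * ω, ρ * ω ^ 2} := by
  ext z
  have hfactor : z ^ 3 - ρ ^ 3 = (z - ρ) * (z - ρ * ω) * (z - ρ * ω ^ 2) := by
    linear_combination (ρ * z ^ 2 - ρ ^ 2 * z * ω + ρ ^ 3 * (ω - 1)) * hω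
  simp only [Set.mem_ofPred_eq, Set.mem_insert_iff, Set.mem_singleton_iff, ← sub_eq_zero (a := z),
    ← sub_eq_zero (a := z ^ 3), hfactor, mul_eq_zero, or_assoc]

end RootsOfUnity

section ConstMul

variable {c : ℂ} (hc : c ≠ 0) (f : ℂ → ℂ)
include hc

theorem mOrd_const_mul (z : ℂ) : mOrd (fun w => c * f w) z = mOrd f z := by
  have hg : AnalyticAt ℂ (fun _ => c) z := analyticAt_const
  have hmero := meromorphicAt_mul_iff_of_ne_zero (f := f) hg hc
  have hord := meromorphicOrderAt_mul_of_ne_zero (f := f) hg hc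
  simp only [Pi.mul_def] at hmero hord
  simp only [mOrd, hmero, hord]

theorem zMult_const_mul (α z : ℂ) : zMult (fun w => c * f w) α z = zMult f (c⁻¹ * α) z := by
  have hsub : (fun w => c * f w - α) = fun w => c * (f w - c⁻¹ * α) := by
    funext w
    rw [mul_sub, mul_inv_cancel_left₀ hc]
  rw [zMult, zMult, hsub, mOrd_const_mul hc]

theorem pMult_const_mul (z : ℂ) : pMult (fun w => c * f w) z = pMult f z := by
  rw [pMult, pMult, mOrd_const_mul hc]

theorem epoleEqCM_const_mul : EpoleEqCM f (fun z => c * f z) :=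
  fun z => (pMult_const_mul hc f z).symm

theorem epoleEq_const_mul (k : ℕ) : EpoleEq f (fun z => c * f z) k :=
  fun z => by rw [pMult_const_mul hc]

variable {S : Set ℂ} (hS : c • S = S)
include hS

theorem eshareEqCM_const_mul : EshareEqCM f (fun z => c * f z) S := fun z => by
  simp only [zMult_const_mul hc]
  exact (finsum_mem_comp_inv_smul_of_smul_set_eq hc hS fun α => zMult f α z).symm

theorem eshareEq_const_mul (k : ℕ) : EshareEq f (fun z => c * f z) S k := fun z => by
  simp only [Ecount, zMult_const_mul hc]
  exact (finsum_mem_comp_inv_smul_of_smul_set_eq hc hS fun α => min (zMult f α z) (k + 1)).symm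

end ConstMul

theorem not_mEq_const_mul_self {c : ℂ} (hc : c ≠ 1) {f : ℂ → ℂ}
    (hf : ¬ MEq f fun _ => 0) : ¬ MEq f fun z => c * f z := by
  rintro ⟨D, hD, hfD⟩
  refine hf ⟨D, hD, fun z hz => ?_⟩
  have : (1 - c) * f z = 0 := by linear_combination hfD z hz
  exact (mul_eq_zero.mp this).resolve_left (sub_ne_zero.mpr hc.symm)

theorem example_b_zero_fails_general
    (a c : ℂ) (ha : a ≠ 0)
    (ω : ℂ) (hω3 : ω ^ 3 = 1) (hω1 : ω ≠ 1)
    (f : ℂ → ℂ) (hf : MNonconst f) :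
    (∃ ρ : ℂ, ρ ^ 3 = -c / a ∧
        {z : ℂ | a * z ^ 3 + c = 0} = {ρ, ρ * ω, ρ * ω ^ 2}) ∧
      EshareEqCM f (fun z => ω * f z) {0} ∧
      EshareEqCM f (fun z => ω * f z) {z : ℂ | a * z ^ 3 + c = 0} ∧
      EpoleEqCM f (fun z => ω * f z) ∧
      EshareEq f (fun z => ω * f z) {0} 0 ∧
      EshareEq f (fun z => ω * f z) {z : ℂ | a * z ^ 3 + c = 0} 3 ∧
      EpoleEq f (fun z => ω * f z) 1 ∧
      ¬ MEq f (fun z => ω * f z) := by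
  have hω0 : ω ≠ 0 := by
    rintro rfl
    norm_num at hω3
  have hω : ω ^ 2 + ω + 1 = 0 := by
    have : (ω - 1) * (ω ^ 2 + ω + 1) = 0 := by linear_combination hω3
    exact (mul_eq_zero.mp this).resolve_left (sub_ne_zero.mpr hω1)
  obtain ⟨ρ, hρ⟩ := IsAlgClosed.exists_pow_nat_eq (-c / a) (n := 3) (by norm_num)
  have hS₂ : {z : ℂ | a * z ^ 3 + c = 0} = {ρ, ρ * ω, ρ * ω ^ 2} := by
    rw [← setOf_pow_three_eq hω, hρ]
    ext z
    simp only [Set.mem_ofPred_eq, eq_div_iff ha]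
    constructor <;> intro h <;> linear_combination h
  have hstable₁ : ω • ({0} : Set ℂ) = {0} := by
    rw [Set.smul_set_singleton, smul_zero]
  have hstable₂ := smul_setOf_pow_eq_of_pow_eq_one three_ne_zero hω3 fun y => a * y + c = 0
  exact ⟨⟨ρ, hρ, hS₂⟩, eshareEqCM_const_mul hω0 f hstable₁, eshareEqCM_const_mul hω0 f hstable₂,
    epoleEqCM_const_mul hω0 f, eshareEq_const_mul hω0 f hstable₁ 0,
    eshareEq_const_mul hω0 f hstable₂ 3, epoleEq_const_mul hω0 f 1,
    not_mEq_const_mul_self hω1 fun h => hf.2 ⟨0, h⟩⟩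

/-- **Example 1.3.** The hypothesis `b ≠ 0` cannot be removed: with `S₁ = {0}`,
`S₂ = {z : a z³ + c = 0} = {ρ, ρω, ρω²}` and `S₃ = {∞}`, where `ω` is a nonreal cube
root of unity, the functions `f` and `g = ω f` share each `Sⱼ` counting multiplicities
(hence with weights `(0, 3, 1)`) for every nonconstant meromorphic `f`, yet `f ≢ g`. -/
theorem example_b_zero_fails
    (a c : ℂ) (ha : a ≠ 0) (hc : c ≠ 0)
    (ω : ℂ) (hω3 : ω ^ 3 = 1) (hω1 : ω ≠ 1)
    (f : ℂ → ℂ) (hf : MNonconst f) :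
    (∃ ρ : ℂ, ρ ^ 3 = -c / a ∧
        {z : ℂ | a * z ^ 3 + c = 0} = {ρ, ρ * ω, ρ * ω ^ 2}) ∧
      EshareEqCM f (fun z => ω * f z) {0} ∧
      EshareEqCM f (fun z => ω * f z) {z : ℂ | a * z ^ 3 + c = 0} ∧
      EpoleEqCM f (fun z => ω * f z) ∧
      EshareEq f (fun z => ω * f z) {0} 0 ∧
      EshareEq f (fun z => ω * f z) {z : ℂ | a * z ^ 3 + c = 0} 3 ∧
      EpoleEq f (fun z => ω * f z) 1 ∧
      ¬ MEq f (fun z => ω * f z) :=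
  example_b_zero_fails_general a c ha ω hω3 hω1 f hf
end
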